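/- Let (M^n, g, f, ρ), n ≥ 3, be a compact static perfect fluid space-time with positive scalar curvature R satisfying the dominant energy condition R/2 ≥ |ρ|. Define v = (1 + αf)^{-(n-2)/2} with α^{-1} = max_M (f² + (n(n-1)/R)|∇f|²)^{1/2}, and let ḡ = v^{4/(n-2)}·g be the conformal metric. Then the scalar curvature R_ḡ of ḡ is non-negative. Moreover, R_ḡ = 0 if and only if Δf = -(R/(n-1))·f and f² + (n(n-1)/R)|∇f|² is constant on M. -/

import Mathlib

/-!
With `u = 1 + αf`, insert the chain-rule formula for `Δv` and the fluid equation into the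
conformal law: all powers of `u` cancel and
`R_ḡ = R (1 - α² (f² + n(n-1)/R |∇f|²)) + n α u · f (R + 2ρ)`.
The first term is nonnegative because `α⁻²` is the maximum of `f² + n(n-1)/R |∇f|²`, the second
because `f ≥ 0` and `R + 2ρ ≥ 0` by the dominant energy condition. Hence `R_ḡ ≡ 0` iff both terms
vanish everywhere: `f (R + 2ρ) = 0`, which by the fluid equation is `Δf = -(R/(n-1)) f`, and
`f² + n(n-1)/R |∇f|²` is constant (necessarily equal to its maximum `α⁻²`).
-/

noncomputable section

/-- squared norm of a vector expressed in an orthonormal frame -/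
def vnormSq {n : ℕ} (v : Fin n → ℝ) : ℝ := ∑ i, (v i) ^ 2

lemma vnormSq_nonneg {n : ℕ} (v : Fin n → ℝ) : 0 ≤ vnormSq v :=
  Finset.sum_nonneg fun _ _ => sq_nonneg _

section IsGreatestSqrt

variable {ι : Type*} {Q : ι → ℝ} {a : ℝ}

lemma le_sq_of_isGreatest_range_sqrt (h : IsGreatest (Set.range fun i => √(Q i)) a) (i : ι) :
    Q i ≤ a ^ 2 :=
  (Real.sqrt_le_iff.mp (h.2 ⟨i, rfl⟩)).2

lemma exists_forall_eq_iff_forall_eq_sq_of_isGreatest_range_sqrt (hQ : ∀ i, 0 ≤ Q i)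
    (h : IsGreatest (Set.range fun i => √(Q i)) a) :
    (∃ C, ∀ i, Q i = C) ↔ ∀ i, Q i = a ^ 2 := by
  refine ⟨fun ⟨C, hC⟩ => ?_, fun h' => ⟨_, h'⟩⟩
  obtain ⟨i₀, hi₀⟩ := h.1
  have ha : 0 ≤ a := hi₀ ▸ Real.sqrt_nonneg _
  have hCa : C = a ^ 2 := (Real.sqrt_eq_iff_eq_sq (hC i₀ ▸ hQ i₀) ha).mp (hC i₀ ▸ hi₀)
  exact fun i => (hC i).trans hCa

end IsGreatestSqrt

lemma conformal_scalar_curvature_rpow_eq {N u α R L G : ℝ} (hN : N ≠ 2) (hu : 0 < u) :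
    (u ^ (-((N - 2) / 2))) ^ (-((N + 2) / (N - 2)))
        * (R * u ^ (-((N - 2) / 2))
          - 4 * (N - 1) / (N - 2)
            * (-((N - 2) / 2) * α * u ^ (-(N / 2)) * L
              + (N * (N - 2) / 4) * α ^ 2 * u ^ (-((N + 2) / 2)) * G))
      = R * u ^ 2 + 2 * (N - 1) * α * u * L - N * (N - 1) * α ^ 2 * G := by
  have hpow : ∀ s : ℝ, u ^ ((N + 2) / 2) * u ^ s = u ^ ((N + 2) / 2 + s) := fun s =>
    (Real.rpow_add hu _ _).symm
  rw [← Real.rpow_mul hu.le, show -((N - 2) / 2) * -((N + 2) / (N - 2)) = (N + 2) / 2 by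
    field_simp]
  have e2 : u ^ ((N + 2) / 2) * u ^ (-((N - 2) / 2)) = u ^ 2 := by
    rw [hpow, show (N + 2) / 2 + -((N - 2) / 2) = ((2 : ℕ) : ℝ) by push_cast; ring,
      Real.rpow_natCast]
  have e1 : u ^ ((N + 2) / 2) * u ^ (-(N / 2)) = u := by
    rw [hpow, show (N + 2) / 2 + -(N / 2) = 1 by ring, Real.rpow_one]
  have e0 : u ^ ((N + 2) / 2) * u ^ (-((N + 2) / 2)) = 1 := by
    rw [hpow, add_neg_cancel, Real.rpow_zero]
  have hk : 4 * (N - 1) / (N - 2) * (N - 2) = 4 * (N - 1) :=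
    div_mul_cancel₀ _ (sub_ne_zero.mpr hN)
  linear_combination R * e2 + 2 * (N - 1) * α * L * e1 - N * (N - 1) * α ^ 2 * G * e0
    + (α * L * (u ^ ((N + 2) / 2) * u ^ (-(N / 2))) / 2
      - N * α ^ 2 * G * (u ^ ((N + 2) / 2) * u ^ (-((N + 2) / 2))) / 4) * hk

lemma conformal_scalar_curvature_fluid_eq {N α R ρ f G : ℝ} (hN : N ≠ 1) (hR : R ≠ 0) :
    R * (1 + α * f) ^ 2
        + 2 * (N - 1) * α * (1 + α * f) * (((N - 2) / (2 * (N - 1)) * R + N / (N - 1) * ρ) * f)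
        - N * (N - 1) * α ^ 2 * G
      = R * (1 - α ^ 2 * (f ^ 2 + (N * (N - 1) / R) * G))
        + N * α * (1 + α * f) * (f * (R + 2 * ρ)) := by
  have hN1 : N - 1 ≠ 0 := sub_ne_zero.mpr hN
  field_simp
  ring

lemma fluid_lap_eq_neg_iff {N R ρ f : ℝ} (hN0 : N ≠ 0) (hN : N ≠ 1) :
    ((N - 2) / (2 * (N - 1)) * R + N / (N - 1) * ρ) * f = -(R / (N - 1)) * f
      ↔ f * (R + 2 * ρ) = 0 := by
  have hN1 : N - 1 ≠ 0 := sub_ne_zero.mpr hN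
  rw [← sub_eq_zero, show ((N - 2) / (2 * (N - 1)) * R + N / (N - 1) * ρ) * f - -(R / (N - 1)) * f
      = N / (2 * (N - 1)) * (f * (R + 2 * ρ)) by field_simp; ring]
  exact mul_eq_zero_iff_left (div_ne_zero hN0 (mul_ne_zero two_ne_zero hN1))

lemma conformal_scalar_curvature_split_nonneg_and_eq_zero_iff {N α R ρ f q : ℝ} (hN : 0 < N)
    (hα : 0 < α) (hf : 0 ≤ f) (hR : 0 < R) (hρ : |ρ| ≤ R / 2) (hq : q ≤ α⁻¹ ^ 2) :
    0 ≤ R * (1 - α ^ 2 * q) + N * α * (1 + α * f) * (f * (R + 2 * ρ))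
      ∧ (R * (1 - α ^ 2 * q) + N * α * (1 + α * f) * (f * (R + 2 * ρ)) = 0
        ↔ q = α⁻¹ ^ 2 ∧ f * (R + 2 * ρ) = 0) := by
  have hα_sq : α⁻¹ ^ 2 = 1 / α ^ 2 := by rw [inv_pow, one_div]
  rw [hα_sq, le_div_iff₀ (by positivity)] at hq
  have hA : 0 ≤ R * (1 - α ^ 2 * q) := mul_nonneg hR.le (by linarith)
  have hc : 0 < N * α * (1 + α * f) := by positivity
  have hB : 0 ≤ N * α * (1 + α * f) * (f * (R + 2 * ρ)) :=
    mul_nonneg hc.le (mul_nonneg hf (by linarith [neg_abs_le ρ]))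
  refine ⟨add_nonneg hA hB, ?_⟩
  rw [add_eq_zero_iff_of_nonneg hA hB, mul_eq_zero_iff_left hR.ne', mul_eq_zero_iff_left hc.ne',
    hα_sq, eq_div_iff (by positivity), sub_eq_zero, eq_comm, mul_comm]

theorem conformal_scalar_curvature_nonneg_SPFST_general
    {n : ℕ} (hn : 3 ≤ n)
    {M : Type}
    (boundary : Set M)
    (f ρ scal lapf : M → ℝ)
    (gradf : M → Fin n → ℝ)
    -- `f⁻¹(0) = ∂M` and `f > 0` in the interior
    (hf0 : ∀ x, f x = 0 ↔ x ∈ boundary)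
    (hfpos : ∀ x, x ∉ boundary → 0 < f x)
    -- the static perfect fluid equations
    (hfluid : ∀ x, lapf x
        = (((n : ℝ) - 2) / (2 * ((n : ℝ) - 1)) * scal x + (n : ℝ) / ((n : ℝ) - 1) * ρ x) * f x)
    -- positive scalar curvature and the dominant energy condition R/2 ≥ |ρ|
    (hscalpos : ∀ x, 0 < scal x)
    (hdec : ∀ x, |ρ x| ≤ scal x / 2)
    -- α⁻¹ = max_M (f² + (n(n-1)/R)|∇f|²)^{1/2}
    (α : ℝ) (hα0 : 0 < α)
    (hα : IsGreatest
      (Set.range fun x =>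
        Real.sqrt ((f x) ^ 2 + ((n : ℝ) * ((n : ℝ) - 1) / scal x) * vnormSq (gradf x))) α⁻¹)
    -- Δ_g v for v = (1+αf)^{-(n-2)/2}, computed by the chain rule
    (lapv : M → ℝ)
    (hlapv : ∀ x, lapv x
        = -(((n : ℝ) - 2) / 2) * α * (1 + α * f x) ^ (-((n : ℝ) / 2)) * lapf x
          + ((n : ℝ) * ((n : ℝ) - 2) / 4) * α ^ 2
              * (1 + α * f x) ^ (-(((n : ℝ) + 2) / 2)) * vnormSq (gradf x))
    -- R_ḡ, given by the conformal transformation law of the scalar curvature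
    (Rbar : M → ℝ)
    (hRbar : ∀ x, Rbar x
        = ((1 + α * f x) ^ (-(((n : ℝ) - 2) / 2))) ^ (-(((n : ℝ) + 2) / ((n : ℝ) - 2)))
            * (scal x * (1 + α * f x) ^ (-(((n : ℝ) - 2) / 2))
                - 4 * ((n : ℝ) - 1) / ((n : ℝ) - 2) * lapv x)) :
    (∀ x, 0 ≤ Rbar x)
    ∧ ((∀ x, Rbar x = 0)
        ↔ ((∀ x, lapf x = -(scal x / ((n : ℝ) - 1)) * f x)
            ∧ ∃ C : ℝ, ∀ x,
                (f x) ^ 2 + ((n : ℝ) * ((n : ℝ) - 1) / scal x) * vnormSq (gradf x) = C)) := by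
  set Q : M → ℝ := fun x => f x ^ 2 + ((n : ℝ) * ((n : ℝ) - 1) / scal x) * vnormSq (gradf x)
  have hN : (3 : ℝ) ≤ n := by exact_mod_cast hn
  have hf : ∀ x, 0 ≤ f x := fun x => by
    by_cases hx : x ∈ boundary
    exacts [((hf0 x).2 hx).ge, (hfpos x hx).le]
  have hu : ∀ x, 0 < 1 + α * f x := fun x => by nlinarith [hf x]
  have hQ0 : ∀ x, 0 ≤ Q x := fun x => by
    have := vnormSq_nonneg (gradf x)
    have : 0 ≤ (n : ℝ) * (n - 1) / scal x := div_nonneg (by nlinarith) (hscalpos x).le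
    positivity
  have hRbar_eq : ∀ x, Rbar x
      = scal x * (1 - α ^ 2 * Q x) + n * α * (1 + α * f x) * (f x * (scal x + 2 * ρ x)) := by
    intro x
    rw [hRbar x, hlapv x, hfluid x, conformal_scalar_curvature_rpow_eq (by linarith) (hu x),
      conformal_scalar_curvature_fluid_eq (by linarith) (hscalpos x).ne']
  have hsplit : ∀ x,
      0 ≤ Rbar x ∧ (Rbar x = 0 ↔ Q x = α⁻¹ ^ 2 ∧ f x * (scal x + 2 * ρ x) = 0) :=
    fun x => hRbar_eq x ▸ conformal_scalar_curvature_split_nonneg_and_eq_zero_iff (by linarith)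
      hα0 (hf x) (hscalpos x) (hdec x) (le_sq_of_isGreatest_range_sqrt hα x)
  refine ⟨fun x => (hsplit x).1, ?_⟩
  have hQ_const : (∃ C, ∀ x, Q x = C) ↔ ∀ x, Q x = α⁻¹ ^ 2 :=
    exists_forall_eq_iff_forall_eq_sq_of_isGreatest_range_sqrt hQ0 hα
  simp only [hfluid, fluid_lap_eq_neg_iff (by linarith : (n : ℝ) ≠ 0) (by linarith),
    fun x => (hsplit x).2, forall_and]
  exact and_comm.trans (Iff.rfl.and hQ_const.symm)

/-- **Lemma.** Let `(Mⁿ, g, f, ρ)`, `n ≥ 3`, be a compact static perfect fluid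
space-time with positive scalar curvature satisfying the dominant energy condition.
With `v = (1+αf)^{-(n-2)/2}`, `α⁻¹ = max_M (f² + (n(n-1)/R)|∇f|²)^{1/2}` and
`ḡ = v^{4/(n-2)}g`, the scalar curvature `R_ḡ` is non-negative; moreover `R_ḡ = 0`
iff `Δf = -(R/(n-1))f` and `f² + (n(n-1)/R)|∇f|²` is constant on `M`. -/
theorem conformal_scalar_curvature_nonneg_SPFST
    {n : ℕ} (hn : 3 ≤ n)
    {M : Type} [MetricSpace M] [MeasurableSpace M] [CompactSpace M]
    (boundary : Set M)
    (f ρ scal lapf : M → ℝ)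
    (gradf : M → Fin n → ℝ)
    (ric hessf : M → Matrix (Fin n) (Fin n) ℝ)
    (hbne : boundary.Nonempty)
    -- `f⁻¹(0) = ∂M` and `f > 0` in the interior
    (hf0 : ∀ x, f x = 0 ↔ x ∈ boundary)
    (hfpos : ∀ x, x ∉ boundary → 0 < f x)
    -- scalar curvature and Laplacian are the traces of Ricci and Hessian
    (hscal : ∀ x, scal x = (ric x).trace)
    (hlapdef : ∀ x, lapf x = (hessf x).trace)
    -- the static perfect fluid equations
    (hstatic : ∀ x, f x • (ric x - (scal x / (n : ℝ)) • (1 : Matrix (Fin n) (Fin n) ℝ))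
        = hessf x - (lapf x / (n : ℝ)) • (1 : Matrix (Fin n) (Fin n) ℝ))
    (hfluid : ∀ x, lapf x
        = (((n : ℝ) - 2) / (2 * ((n : ℝ) - 1)) * scal x + (n : ℝ) / ((n : ℝ) - 1) * ρ x) * f x)
    -- positive scalar curvature and the dominant energy condition R/2 ≥ |ρ|
    (hscalpos : ∀ x, 0 < scal x)
    (hdec : ∀ x, |ρ x| ≤ scal x / 2)
    -- α⁻¹ = max_M (f² + (n(n-1)/R)|∇f|²)^{1/2}
    (α : ℝ) (hα0 : 0 < α)
    (hα : IsGreatest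
      (Set.range fun x =>
        Real.sqrt ((f x) ^ 2 + ((n : ℝ) * ((n : ℝ) - 1) / scal x) * vnormSq (gradf x))) α⁻¹)
    -- Δ_g v for v = (1+αf)^{-(n-2)/2}, computed by the chain rule
    (lapv : M → ℝ)
    (hlapv : ∀ x, lapv x
        = -(((n : ℝ) - 2) / 2) * α * (1 + α * f x) ^ (-((n : ℝ) / 2)) * lapf x
          + ((n : ℝ) * ((n : ℝ) - 2) / 4) * α ^ 2
              * (1 + α * f x) ^ (-(((n : ℝ) + 2) / 2)) * vnormSq (gradf x))
    -- R_ḡ, given by the conformal transformation law of the scalar curvature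
    (Rbar : M → ℝ)
    (hRbar : ∀ x, Rbar x
        = ((1 + α * f x) ^ (-(((n : ℝ) - 2) / 2))) ^ (-(((n : ℝ) + 2) / ((n : ℝ) - 2)))
            * (scal x * (1 + α * f x) ^ (-(((n : ℝ) - 2) / 2))
                - 4 * ((n : ℝ) - 1) / ((n : ℝ) - 2) * lapv x)) :
    (∀ x, 0 ≤ Rbar x)
    ∧ ((∀ x, Rbar x = 0)
        ↔ ((∀ x, lapf x = -(scal x / ((n : ℝ) - 1)) * f x)
            ∧ ∃ C : ℝ, ∀ x,
                (f x) ^ 2 + ((n : ℝ) * ((n : ℝ) - 1) / scal x) * vnormSq (gradf x) = C)) :=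
  conformal_scalar_curvature_nonneg_SPFST_general hn boundary f ρ scal lapf gradf hf0 hfpos hfluid
    hscalpos hdec α hα0 hα lapv hlapv Rbar hRbar
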